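/- Let E be a Banach space and A a closed densely defined linear operator on E such that (-∞,0] is contained in the resolvent set of A and there is C ≥ 1 with ‖(λI + A)^{-1}‖ ≤ C/(1+λ) for all λ ≥ 0. Then for every z with Re z ∈ (0,1) the integral ∫₀^∞ t^{-Re z} ‖(tI+A)^{-1}x‖ dt converges for every x ∈ E, so the Balakrishnan formula A^{-z}x = (sin πz / π) ∫₀^∞ t^{-z}(tI+A)^{-1} x dt defines a bounded linear operator A^{-z} on E. -/

import Mathlib

/-!
The resolvent identity `R t - R u = (u - t) R t R u` and the uniform bound `‖R t‖ ≤ C` make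
`t ↦ R t` Lipschitz in operator norm, hence measurable. The operator-valued integrand
`t^{-z} R t` is then Bochner integrable on `(0, ∞)`, being dominated by `C t^{-Re z} / (1 + t)`,
which behaves like `t^{-Re z}` at `0` and like `t^{-Re z - 1}` at `∞`. Its integral, scaled by
`sin πz / π`, is the bounded operator `A^{-z}`, and evaluating it at `x` commutes with integration.
-/

open MeasureTheory Real Set ContinuousLinearMap

theorem integrableOn_rpow_div_one_add {s : ℝ} (hs₀ : -1 < s) (hs₁ : s < 0) :
    IntegrableOn (fun t : ℝ => t ^ s / (1 + t)) (Ioi 0) := by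
  have hcont : ContinuousOn (fun t : ℝ => t ^ s / (1 + t)) (Ioi 0) := fun t (ht : 0 < t) =>
    ((continuousAt_rpow_const t s (Or.inl ht.ne')).div (by fun_prop)
      (by positivity)).continuousWithinAt
  have near_zero : IntegrableOn (fun t : ℝ => t ^ s / (1 + t)) (Ioc 0 1) := by
    have hpow : IntegrableOn (fun t : ℝ => t ^ s) (Ioc 0 1) := by
      rw [← intervalIntegrable_iff_integrableOn_Ioc_of_le zero_le_one]
      exact intervalIntegral.intervalIntegrable_rpow' hs₀
    refine hpow.mono' ((hcont.mono Ioc_subset_Ioi_self).aestronglyMeasurable measurableSet_Ioc) ?_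
    filter_upwards [ae_restrict_mem measurableSet_Ioc] with t ht
    have ht₀ : 0 < t := ht.1
    rw [norm_of_nonneg (by positivity)]
    exact div_le_self (by positivity) (by linarith)
  have near_infty : IntegrableOn (fun t : ℝ => t ^ s / (1 + t)) (Ioi 1) := by
    refine (integrableOn_Ioi_rpow_of_lt (by linarith : s - 1 < -1) one_pos).mono'
      ((hcont.mono (Ioi_subset_Ioi zero_le_one)).aestronglyMeasurable measurableSet_Ioi) ?_
    filter_upwards [ae_restrict_mem measurableSet_Ioi] with t (ht : 1 < t)
    have ht₀ : 0 < t := one_pos.trans ht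
    rw [norm_of_nonneg (by positivity), rpow_sub ht₀, rpow_one]
    exact div_le_div_of_nonneg_left (by positivity) ht₀ (by linarith)
  rw [← Ioc_union_Ioi_eq_Ioi zero_le_one]
  exact near_zero.union near_infty

theorem resolvent_sub_resolvent {𝕜 E : Type*} [NontriviallyNormedField 𝕜]
    [NormedAddCommGroup E] [NormedSpace 𝕜 E] {A : E →ₗ.[𝕜] E} {R S : E →L[𝕜] E} {a b : 𝕜}
    (hR : ∀ x : A.domain, R (a • (x : E) + A x) = x)
    (hS : ∀ y : E, ∃ hy : S y ∈ A.domain, b • S y + A ⟨S y, hy⟩ = y) :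
    R - S = (b - a) • R.comp S := by
  ext y
  obtain ⟨hy, hSy⟩ := hS y
  have h : R (a • S y + A ⟨S y, hy⟩) = S y := hR ⟨S y, hy⟩
  have hshift : a • S y + A ⟨S y, hy⟩ = (a - b) • S y + y :=
    calc a • S y + A ⟨S y, hy⟩ = (a - b) • S y + (b • S y + A ⟨S y, hy⟩) := by module
      _ = (a - b) • S y + y := by rw [hSy]
  rw [hshift, map_add, map_smul] at h
  simp only [sub_apply, smul_apply, comp_apply]
  linear_combination (norm := module) h

theorem lipschitzOnWith_of_resolvent_identity {E : Type*} [NormedAddCommGroup E]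
    [NormedSpace ℂ E] {R : ℝ → E →L[ℂ] E} {s : Set ℝ} {M : ℝ}
    (hid : ∀ t ∈ s, ∀ u ∈ s, R t - R u = ((u : ℂ) - t) • (R t).comp (R u))
    (hM : ∀ t ∈ s, ‖R t‖ ≤ M) :
    LipschitzOnWith (M * M).toNNReal R s := by
  refine LipschitzOnWith.of_dist_le_mul fun t ht u hu => ?_
  have hM₀ : 0 ≤ M := (norm_nonneg _).trans (hM t ht)
  rw [dist_eq_norm, hid t ht u hu, norm_smul, ← Complex.ofReal_sub, Complex.norm_real,
    norm_eq_abs, abs_sub_comm, ← dist_eq, Real.coe_toNNReal _ (by positivity), mul_comm]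
  gcongr
  exact (opNorm_comp_le _ _).trans (mul_le_mul (hM t ht) (hM u hu) (norm_nonneg _) hM₀)

theorem integrableOn_cpow_smul_of_norm_le {E : Type*} [NormedAddCommGroup E] [NormedSpace ℂ E]
    {R : ℝ → E →L[ℂ] E} (hR : ContinuousOn R (Ioi 0)) {C : ℝ}
    (hbound : ∀ t, 0 < t → ‖R t‖ ≤ C / (1 + t)) {z : ℂ} (hz : z.re ∈ Ioo (0 : ℝ) 1) :
    IntegrableOn (fun t : ℝ => (t : ℂ) ^ (-z) • R t) (Ioi 0) := by
  have hpow : ContinuousOn (fun t : ℝ => (t : ℂ) ^ (-z)) (Ioi 0) := fun t (ht : 0 < t) =>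
    (Complex.continuousAt_ofReal_cpow_const _ _ (Or.inr ht.ne')).continuousWithinAt
  have hmeas : ContinuousOn (fun t : ℝ => (t : ℂ) ^ (-z) • R t) (Ioi 0) := hpow.smul hR
  have hweight := (integrableOn_rpow_div_one_add (s := -z.re) (by linarith [hz.2])
    (by linarith [hz.1])).const_mul C
  refine hweight.mono' (hmeas.aestronglyMeasurable measurableSet_Ioi) ?_
  filter_upwards [ae_restrict_mem measurableSet_Ioi] with t (ht : 0 < t)
  rw [norm_smul, Complex.norm_cpow_eq_rpow_re_of_pos ht, Complex.neg_re, mul_div_assoc',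
    mul_comm C, mul_div_assoc]
  exact mul_le_mul_of_nonneg_left (hbound t ht) (by positivity)

theorem stmt8_general
    {E : Type} [NormedAddCommGroup E] [NormedSpace ℂ E]
    (A : E →ₗ.[ℂ] E)
    (R : ℝ → E →L[ℂ] E) (C : ℝ)
    (hres1 : ∀ t : ℝ, 0 ≤ t → ∀ x : A.domain, R t ((t : ℂ) • (x : E) + A x) = x)
    (hres2 : ∀ t : ℝ, 0 ≤ t → ∀ y : E,
      ∃ hy : R t y ∈ A.domain, (t : ℂ) • R t y + A ⟨R t y, hy⟩ = y)
    (hbound : ∀ t : ℝ, 0 ≤ t → ‖R t‖ ≤ C / (1 + t))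
    (z : ℂ) (hz : z.re ∈ Set.Ioo (0 : ℝ) 1) :
    (∀ x : E, IntegrableOn (fun t : ℝ => t ^ (-z.re) * ‖R t x‖) (Set.Ioi 0)) ∧
      ∃ B : E →L[ℂ] E, ∀ x : E,
        B x = (Complex.sin ((π : ℂ) * z) / (π : ℂ)) •
          ∫ t in Set.Ioi (0 : ℝ), ((t : ℂ) ^ (-z)) • R t x := by
  have hC₀ : 0 ≤ C := by simpa using (norm_nonneg _).trans (hbound 0 le_rfl)
  have hR_le : ∀ t ∈ Ici (0 : ℝ), ‖R t‖ ≤ C := fun t (ht : 0 ≤ t) =>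
    (hbound t ht).trans (div_le_self hC₀ (by linarith))
  have hlip := lipschitzOnWith_of_resolvent_identity
    (fun t ht u hu => resolvent_sub_resolvent (hres1 t ht) (hres2 u hu)) hR_le
  have hint := integrableOn_cpow_smul_of_norm_le (hlip.continuousOn.mono Ioi_subset_Ici_self)
    (fun t ht => hbound t ht.le) hz
  refine ⟨fun x => ?_, (Complex.sin (π * z) / π) • ∫ t in Ioi (0 : ℝ), (t : ℂ) ^ (-z) • R t,
    fun x => by simp only [smul_apply, integral_apply hint]⟩
  have hnorm : IntegrableOn (fun t : ℝ => ‖((t : ℂ) ^ (-z) • R t) x‖) (Ioi 0) :=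
    (hint.apply_continuousLinearMap x).norm
  refine hnorm.congr_fun (fun t (ht : 0 < t) => ?_) measurableSet_Ioi
  simp only [smul_apply, norm_smul, Complex.norm_cpow_eq_rpow_re_of_pos ht, Complex.neg_re]

/-- Balakrishnan formula for negative fractional powers of a positive operator:
if `A` is closed, densely defined, with `(-∞,0] ⊂ ρ(A)` and resolvent bound
`‖(tI+A)⁻¹‖ ≤ C/(1+t)` for `t ≥ 0`, then for `Re z ∈ (0,1)` the integral
`∫₀^∞ t^{-Re z} ‖(tI+A)⁻¹x‖ dt` converges for every `x`, and
`A^{-z}x = (sin πz/π) ∫₀^∞ t^{-z} (tI+A)⁻¹ x dt` defines a bounded operator. -/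
theorem stmt8
    {E : Type} [NormedAddCommGroup E] [NormedSpace ℂ E] [CompleteSpace E]
    (A : E →ₗ.[ℂ] E) (hdense : Dense (A.domain : Set E)) (hclosed : A.IsClosed)
    (R : ℝ → E →L[ℂ] E) (C : ℝ) (hC : 1 ≤ C)
    (hres1 : ∀ t : ℝ, 0 ≤ t → ∀ x : A.domain, R t ((t : ℂ) • (x : E) + A x) = x)
    (hres2 : ∀ t : ℝ, 0 ≤ t → ∀ y : E,
      ∃ hy : R t y ∈ A.domain, (t : ℂ) • R t y + A ⟨R t y, hy⟩ = y)
    (hbound : ∀ t : ℝ, 0 ≤ t → ‖R t‖ ≤ C / (1 + t))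
    (z : ℂ) (hz : z.re ∈ Set.Ioo (0 : ℝ) 1) :
    (∀ x : E, IntegrableOn (fun t : ℝ => t ^ (-z.re) * ‖R t x‖) (Set.Ioi 0)) ∧
      ∃ B : E →L[ℂ] E, ∀ x : E,
        B x = (Complex.sin ((π : ℂ) * z) / (π : ℂ)) •
          ∫ t in Set.Ioi (0 : ℝ), ((t : ℂ) ^ (-z)) • R t x :=
  stmt8_general A R C hres1 hres2 hbound z hz
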